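/- Let W be a weak equivalence set (a wide decomposable subcategory that is the class of weak equivalences of some model structure) on a finite lattice P. If T₁ and T₂ are transfer systems which each occur as the acyclic fibrations of a model structure with weak equivalences W, then T₁ ∩ T₂ also occurs as the acyclic fibrations of a model structure with weak equivalences W. -/
import Mathlib


variable {P : Type*}

section Defs
variable [Lattice P]

/-- A wide subcategory of the poset category of `P`: contains all identities,
refines `≤`, and is closed under composition. -/
def IsWide (R : P → P → Prop) : Prop :=
  (∀ x, R x x) ∧ (∀ x y, R x y → x ≤ y) ∧ (∀ x y z, R x y → R y z → R x z)

/-- A decomposable subcategory: if a composite is in `R`, so are both factors. -/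
def IsDecomposable (R : P → P → Prop) : Prop :=
  ∀ x y z : P, x ≤ y → y ≤ z → R x z → R x y ∧ R y z

/-- A transfer system: a partial order refining `≤`, closed under restriction
(pullback) along meets. -/
def IsTransferSystem (R : P → P → Prop) : Prop :=
  (∀ x, R x x) ∧ (∀ x y z, R x y → R y z → R x z) ∧
  (∀ x y, R x y → R y x → x = y) ∧
  (∀ x y, R x y → x ≤ y) ∧
  (∀ x y z, R x y → z ≤ y → R (x ⊓ z) z)

/-- A cotransfer system: a partial order refining `≤`, closed under
cobase change (pushout) along joins. -/
def IsCotransferSystem (R : P → P → Prop) : Prop :=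
  (∀ x, R x x) ∧ (∀ x y z, R x y → R y z → R x z) ∧
  (∀ x y, R x y → R y x → x = y) ∧
  (∀ x y, R x y → x ≤ y) ∧
  (∀ x y z, R x y → x ≤ z → R z (y ⊔ z))

/-- Closed under pullbacks: the pullback of `b → d` along `c → d` is `b ⊓ c → c`. -/
def PullbackClosed (R : P → P → Prop) : Prop :=
  ∀ b c d : P, R b d → c ≤ d → R (b ⊓ c) c

/-- Closed under pushouts: the pushout of `a → b` along `a → c` is `c → b ⊔ c`. -/
def PushoutClosed (R : P → P → Prop) : Prop :=
  ∀ a b c : P, R a b → a ≤ c → R c (b ⊔ c)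

/-- The left lifting class of a class `S` of morphisms of the poset category:
pairs `(a,b)` with `a ≤ b` having the left lifting property against every
member of `S`. -/
def LLP (S : P → P → Prop) (a b : P) : Prop :=
  a ≤ b ∧ ∀ x y, S x y → a ≤ x → b ≤ y → b ≤ x

/-- The right lifting class of a class `S` of morphisms of the poset category. -/
def RLP (S : P → P → Prop) (x y : P) : Prop :=
  x ≤ y ∧ ∀ a b, S a b → a ≤ x → b ≤ y → b ≤ x

/-- A weak factorization system `(L, R)`: every morphism factors as a map in `L`
followed by a map in `R`, and `L = ᵇR`, `R = Lᵇ`. -/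
def IsWFS (L R : P → P → Prop) : Prop :=
  (∀ x y : P, x ≤ y → ∃ z, L x z ∧ R z y) ∧
  (∀ a b, L a b ↔ LLP R a b) ∧
  (∀ x y, R x y ↔ RLP L x y)

/-- The composite class `S ∘ T` (first `T`, then `S`). -/
def Comp (S T : P → P → Prop) (x z : P) : Prop :=
  ∃ y, T x y ∧ S y z

/-- The two-out-of-three property for a class of morphisms. -/
def TwoOutOfThree (W : P → P → Prop) : Prop :=
  ∀ x y z : P, x ≤ y → y ≤ z →
    ((W x y → W y z → W x z) ∧ (W x y → W x z → W y z) ∧ (W y z → W x z → W x y))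

/-- A model structure on the poset category of `P`, given by acyclic
cofibrations, fibrations, cofibrations and acyclic fibrations: two weak
factorization systems `(AC, F)` and `(C, AF)` with `AC ⊆ C`, such that
`W := AF ∘ AC` satisfies two-out-of-three. -/
def IsModel (AC F C AF : P → P → Prop) : Prop :=
  IsWFS AC F ∧ IsWFS C AF ∧ (∀ x y, AC x y → C x y) ∧
  TwoOutOfThree (Comp AF AC)

/-- `T` occurs as the class of acyclic fibrations of a model structure whose
class of weak equivalences is `W`. -/
def OccursAsAF (W T : P → P → Prop) : Prop :=
  ∃ AC F C, IsModel AC F C T ∧ ∀ x y, Comp T AC x y ↔ W x y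

end Defs

section MyHelpers
variable [Lattice P]

lemma my_llp_refl (S : P → P → Prop) (a : P) : LLP S a a :=
  ⟨le_rfl, fun _ _ _ h _ => h⟩

lemma my_llp_trans {S : P → P → Prop} {a b c : P} (h1 : LLP S a b) (h2 : LLP S b c) :
    LLP S a c :=
  ⟨h1.1.trans h2.1, fun x y hS hax hcy =>
    h2.2 x y hS (h1.2 x y hS hax (h2.1.trans hcy)) hcy⟩

lemma my_llp_pushout {S : P → P → Prop} {a b c : P} (h : LLP S a b) (hac : a ≤ c) :
    LLP S c (b ⊔ c) :=
  ⟨le_sup_right, fun x y hS hcx hby =>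
    sup_le (h.2 x y hS (hac.trans hcx) (le_sup_left.trans hby)) hcx⟩

lemma my_llp_anti {S S' : P → P → Prop} (hss : ∀ x y, S x y → S' x y) {a b : P}
    (h : LLP S' a b) : LLP S a b :=
  ⟨h.1, fun x y hS => h.2 x y (hss x y hS)⟩

lemma my_rlp_refl (S : P → P → Prop) (x : P) : RLP S x x :=
  ⟨le_rfl, fun _ _ _ _ h => h⟩

lemma my_rlp_pullback {S : P → P → Prop} {b c d : P} (h : RLP S b d) (hcd : c ≤ d) :
    RLP S (b ⊓ c) c :=
  ⟨inf_le_right, fun a e hS ha he =>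
    le_inf (h.2 a e hS (ha.trans inf_le_left) (he.trans hcd)) he⟩

lemma my_rlp_anti {S S' : P → P → Prop} (hss : ∀ x y, S x y → S' x y) {a b : P}
    (h : RLP S' a b) : RLP S a b :=
  ⟨h.1, fun x y hS => h.2 x y (hss x y hS)⟩

lemma my_transfer_factor [Fintype P] {T : P → P → Prop}
    (hrefl : ∀ x, T x x) (htrans : ∀ x y z, T x y → T y z → T x z)
    (hle : ∀ x y, T x y → x ≤ y)
    (hpb : ∀ x y z, T x y → z ≤ y → T (x ⊓ z) z) :
    ∀ x y : P, x ≤ y → ∃ z, LLP T x z ∧ T z y := by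
  classical
  intro x y hxy
  set s : Finset P := Finset.univ.filter (fun z => x ≤ z ∧ T z y) with hs
  have hmem : ∀ z, z ∈ s ↔ x ≤ z ∧ T z y := by intro z; simp [hs]
  have hys : y ∈ s := (hmem y).mpr ⟨hxy, hrefl y⟩
  have hne : s.Nonempty := ⟨y, hys⟩
  set z0 := s.inf' hne id with hz0
  have hz0mem : x ≤ z0 ∧ T z0 y :=
    Finset.inf'_induction (p := fun z => x ≤ z ∧ T z y) hne id
      (fun a ha b hb => ⟨le_inf ha.1 hb.1,
        htrans _ _ _ (hpb a y b ha.2 (hle b y hb.2)) hb.2⟩)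
      (fun z hz => (hmem z).mp hz)
  refine ⟨z0, ⟨hz0mem.1, ?_⟩, hz0mem.2⟩
  intro u v hT hxu hz0v
  have h1 : T (u ⊓ z0) z0 := hpb u v z0 hT hz0v
  have h2 : (u ⊓ z0) ∈ s := (hmem _).mpr ⟨le_inf hxu hz0mem.1, htrans _ _ _ h1 hz0mem.2⟩
  exact (Finset.inf'_le id h2).trans inf_le_left

lemma my_cotransfer_factor [Fintype P] {M : P → P → Prop}
    (hrefl : ∀ x, M x x) (htrans : ∀ x y z, M x y → M y z → M x z)
    (hle : ∀ x y, M x y → x ≤ y)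
    (hpo : ∀ a b c, M a b → a ≤ c → M c (b ⊔ c)) :
    ∀ x y : P, x ≤ y → ∃ z, M x z ∧ RLP M z y := by
  classical
  intro x y hxy
  set s : Finset P := Finset.univ.filter (fun z => M x z ∧ z ≤ y) with hs
  have hmem : ∀ z, z ∈ s ↔ M x z ∧ z ≤ y := by intro z; simp [hs]
  have hxs : x ∈ s := (hmem x).mpr ⟨hrefl x, hxy⟩
  have hne : s.Nonempty := ⟨x, hxs⟩
  set z0 := s.sup' hne id with hz0
  have hz0mem : M x z0 ∧ z0 ≤ y :=
    Finset.sup'_induction (p := fun z => M x z ∧ z ≤ y) hne id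
      (fun a ha b hb => ⟨htrans _ _ _ hb.1 (hpo x a b ha.1 (hle x b hb.1)),
        sup_le ha.2 hb.2⟩)
      (fun z hz => (hmem z).mp hz)
  refine ⟨z0, hz0mem.1, ⟨hz0mem.2, ?_⟩⟩
  intro u v hM huz0 hvy
  have h1 : M z0 (v ⊔ z0) := hpo u v z0 hM huz0
  have h2 : (v ⊔ z0) ∈ s := (hmem _).mpr ⟨htrans _ _ _ hz0mem.1 h1, sup_le hvy hz0mem.2⟩
  exact le_sup_left.trans (Finset.le_sup' id h2)

lemma my_transfer_isWFS [Fintype P] {T : P → P → Prop}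
    (hrefl : ∀ x, T x x) (htrans : ∀ x y z, T x y → T y z → T x z)
    (hle : ∀ x y, T x y → x ≤ y)
    (hpb : ∀ x y z, T x y → z ≤ y → T (x ⊓ z) z) :
    IsWFS (LLP T) T := by
  refine ⟨my_transfer_factor hrefl htrans hle hpb, fun a b => Iff.rfl, fun x y => ⟨?_, ?_⟩⟩
  · intro h
    exact ⟨hle x y h, fun a b hab hax hby => hab.2 x y h hax hby⟩
  · rintro ⟨hxy, hlift⟩
    obtain ⟨z, hLz, hTz⟩ := my_transfer_factor hrefl htrans hle hpb x y hxy
    have hzx : z ≤ x := hlift x z hLz le_rfl (hle _ _ hTz)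
    have hEq : z = x := le_antisymm hzx hLz.1
    rwa [hEq] at hTz

lemma my_cotransfer_isWFS [Fintype P] {M : P → P → Prop}
    (hrefl : ∀ x, M x x) (htrans : ∀ x y z, M x y → M y z → M x z)
    (hle : ∀ x y, M x y → x ≤ y)
    (hpo : ∀ a b c, M a b → a ≤ c → M c (b ⊔ c)) :
    IsWFS M (RLP M) := by
  have hfac := my_cotransfer_factor hrefl htrans hle hpo
  refine ⟨hfac, fun a b => ⟨?_, ?_⟩, fun x y => Iff.rfl⟩
  · intro h
    exact ⟨hle a b h, fun x y hxy hax hby => hxy.2 a b h hax hby⟩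
  · rintro ⟨hab, hlift⟩
    obtain ⟨z, hMz, hRz⟩ := hfac a b hab
    have hbz : b ≤ z := hlift z b hRz (hle _ _ hMz) le_rfl
    have hEq : z = b := le_antisymm hRz.1 hbz
    rwa [hEq] at hMz

lemma my_model_AC_iff {AC F C T : P → P → Prop} [Fintype P] (h : IsModel AC F C T) :
    ∀ a b, AC a b ↔ (LLP T a b ∧ Comp T AC a b) := by
  obtain ⟨hW1, hW2, hsub, t23⟩ := h
  have Trefl : ∀ x, T x x := fun x => (hW2.2.2 x x).mpr (my_rlp_refl _ x)
  have ACle : ∀ x y, AC x y → x ≤ y := fun x y hx => ((hW1.2.1 x y).mp hx).1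
  have Fle : ∀ x y, F x y → x ≤ y := fun x y hx => ((hW1.2.2 x y).mp hx).1
  have Tle : ∀ x y, T x y → x ≤ y := fun x y hx => ((hW2.2.2 x y).mp hx).1
  intro a b
  constructor
  · intro hAC
    exact ⟨(hW2.2.1 a b).mp (hsub a b hAC), ⟨b, hAC, Trefl b⟩⟩
  · rintro ⟨hC, hWab⟩
    obtain ⟨z, hACz, hFz⟩ := hW1.1 a b hC.1
    have haz : a ≤ z := ACle _ _ hACz
    have hzb : z ≤ b := Fle _ _ hFz
    have Waz : Comp T AC a z := ⟨z, hACz, Trefl z⟩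
    have Wzb : Comp T AC z b := (t23 a z b haz hzb).2.1 Waz hWab
    obtain ⟨m, hACzm, hTmb⟩ := Wzb
    have hLzm : LLP F z m := (hW1.2.1 z m).mp hACzm
    have hmz : m ≤ z := hLzm.2 z b hFz le_rfl (Tle _ _ hTmb)
    have hmeq : m = z := le_antisymm hmz (ACle _ _ hACzm)
    rw [hmeq] at hTmb
    have hbz : b ≤ z := hC.2 z b hTmb haz le_rfl
    have hzeq : z = b := le_antisymm hzb hbz
    rwa [hzeq] at hACz

lemma my_model_decomp {AC F C T : P → P → Prop} (h : IsModel AC F C T) :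
    IsDecomposable (Comp T AC) := by
  obtain ⟨hW1, hW2, hsub, t23⟩ := h
  have Trefl : ∀ x, T x x := fun x => (hW2.2.2 x x).mpr (my_rlp_refl _ x)
  have ACle : ∀ x y, AC x y → x ≤ y := fun x y hx => ((hW1.2.1 x y).mp hx).1
  have ACrefl : ∀ x, AC x x := fun x => (hW1.2.1 x x).mpr (my_llp_refl _ x)
  rintro x y z hxy hyz ⟨m, hACm, hTmz⟩
  have hTny : T (m ⊓ y) y := (hW2.2.2 _ _).mpr
    (my_rlp_pullback ((hW2.2.2 m z).mp hTmz) hyz)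
  have hxn : x ≤ m ⊓ y := le_inf (ACle _ _ hACm) hxy
  have hACnm : AC (m ⊓ y) m := by
    have := my_llp_pushout ((hW1.2.1 x m).mp hACm) hxn
    rw [sup_inf_self] at this
    exact (hW1.2.1 _ _).mpr this
  have Wnz : Comp T AC (m ⊓ y) z := ⟨m, hACnm, hTmz⟩
  have Wny : Comp T AC (m ⊓ y) y := ⟨m ⊓ y, ACrefl _, hTny⟩
  have Wxz : Comp T AC x z := ⟨m, hACm, hTmz⟩
  have hnz : m ⊓ y ≤ z := le_trans inf_le_right hyz
  have Wxn : Comp T AC x (m ⊓ y) := (t23 x (m ⊓ y) z hxn hnz).2.2 Wnz Wxz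
  have Wxy : Comp T AC x y := (t23 x (m ⊓ y) y hxn inf_le_right).1 Wxn Wny
  exact ⟨Wxy, (t23 x y z hxy hyz).2.1 Wxy Wxz⟩

end MyHelpers

/-- If `T₁` and `T₂` both occur as the acyclic fibrations of model structures
with weak equivalences `W`, then so does `T₁ ∩ T₂`. -/
theorem occursAsAF_inter [Lattice P] [Fintype P]
    (W T₁ T₂ : P → P → Prop)
    (h₁ : OccursAsAF W T₁) (h₂ : OccursAsAF W T₂) :
    OccursAsAF W (fun x y => T₁ x y ∧ T₂ x y) := by
  classical
  obtain ⟨A₁, F₁, C₁, hM₁, hWeq₁⟩ := h₁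
  obtain ⟨A₂, F₂, C₂, hM₂, hWeq₂⟩ := h₂
  set T : P → P → Prop := fun x y => T₁ x y ∧ T₂ x y with hTdef
  -- WFS components of the two given model structures
  have hW1₁ := hM₁.1          -- IsWFS A₁ F₁
  have hW2₁ := hM₁.2.1        -- IsWFS C₁ T₁
  have hW1₂ := hM₂.1
  have hW2₂ := hM₂.2.1
  -- T₁, T₂ are transfer-like
  have refl₁ : ∀ x, T₁ x x := fun x => (hW2₁.2.2 x x).mpr (my_rlp_refl _ x)
  have refl₂ : ∀ x, T₂ x x := fun x => (hW2₂.2.2 x x).mpr (my_rlp_refl _ x)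
  have le₁ : ∀ x y, T₁ x y → x ≤ y := fun x y hx => ((hW2₁.2.2 x y).mp hx).1
  have le₂ : ∀ x y, T₂ x y → x ≤ y := fun x y hx => ((hW2₂.2.2 x y).mp hx).1
  have trans₁ : ∀ x y z, T₁ x y → T₁ y z → T₁ x z := by
    intro x y z hxy hyz
    refine (hW2₁.2.2 x z).mpr ⟨(le₁ _ _ hxy).trans (le₁ _ _ hyz), fun a b hab hax hbz => ?_⟩
    have hby : b ≤ y := ((hW2₁.2.2 y z).mp hyz).2 a b hab (hax.trans (le₁ _ _ hxy)) hbz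
    exact ((hW2₁.2.2 x y).mp hxy).2 a b hab hax hby
  have trans₂ : ∀ x y z, T₂ x y → T₂ y z → T₂ x z := by
    intro x y z hxy hyz
    refine (hW2₂.2.2 x z).mpr ⟨(le₂ _ _ hxy).trans (le₂ _ _ hyz), fun a b hab hax hbz => ?_⟩
    have hby : b ≤ y := ((hW2₂.2.2 y z).mp hyz).2 a b hab (hax.trans (le₂ _ _ hxy)) hbz
    exact ((hW2₂.2.2 x y).mp hxy).2 a b hab hax hby
  have pb₁ : ∀ x y z, T₁ x y → z ≤ y → T₁ (x ⊓ z) z := fun x y z hxy hzy =>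
    (hW2₁.2.2 _ _).mpr (my_rlp_pullback ((hW2₁.2.2 x y).mp hxy) hzy)
  have pb₂ : ∀ x y z, T₂ x y → z ≤ y → T₂ (x ⊓ z) z := fun x y z hxy hzy =>
    (hW2₂.2.2 _ _).mpr (my_rlp_pullback ((hW2₂.2.2 x y).mp hxy) hzy)
  -- T is transfer-like
  have Trefl : ∀ x, T x x := fun x => ⟨refl₁ x, refl₂ x⟩
  have Tle : ∀ x y, T x y → x ≤ y := fun x y h => le₁ x y h.1
  have Ttrans : ∀ x y z, T x y → T y z → T x z := fun x y z h h' =>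
    ⟨trans₁ _ _ _ h.1 h'.1, trans₂ _ _ _ h.2 h'.2⟩
  have Tpb : ∀ x y z, T x y → z ≤ y → T (x ⊓ z) z := fun x y z h hzy =>
    ⟨pb₁ _ _ _ h.1 hzy, pb₂ _ _ _ h.2 hzy⟩
  have hWFS_CT : IsWFS (LLP T) T := my_transfer_isWFS Trefl Ttrans Tle Tpb
  -- facts about W
  have A₁refl : ∀ x, A₁ x x := fun x => (hW1₁.2.1 x x).mpr (my_llp_refl _ x)
  have A₁le : ∀ x y, A₁ x y → x ≤ y := fun x y h => ((hW1₁.2.1 x y).mp h).1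
  have WofT₁ : ∀ x y, T₁ x y → W x y := fun x y h => (hWeq₁ x y).mp ⟨x, A₁refl x, h⟩
  have Wrefl : ∀ x, W x x := fun x => WofT₁ x x (refl₁ x)
  have Wle : ∀ x y, W x y → x ≤ y := by
    intro x y h
    obtain ⟨m, hA, hT⟩ := (hWeq₁ x y).mpr h
    exact (A₁le _ _ hA).trans (le₁ _ _ hT)
  have t23W : TwoOutOfThree W := by
    intro x y z hxy hyz
    obtain ⟨p, q, r⟩ := hM₁.2.2.2 x y z hxy hyz
    exact ⟨fun h h' => (hWeq₁ _ _).mp (p ((hWeq₁ _ _).mpr h) ((hWeq₁ _ _).mpr h')),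
      fun h h' => (hWeq₁ _ _).mp (q ((hWeq₁ _ _).mpr h) ((hWeq₁ _ _).mpr h')),
      fun h h' => (hWeq₁ _ _).mp (r ((hWeq₁ _ _).mpr h) ((hWeq₁ _ _).mpr h'))⟩
  have Wdecomp : IsDecomposable W := by
    intro x y z hxy hyz hW
    obtain ⟨u, v⟩ := my_model_decomp hM₁ x y z hxy hyz ((hWeq₁ x z).mpr hW)
    exact ⟨(hWeq₁ x y).mp u, (hWeq₁ y z).mp v⟩
  -- characterization of A₁, A₂ in terms of W
  have hA₁char : ∀ a b, A₁ a b ↔ (LLP T₁ a b ∧ W a b) := by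
    intro a b
    rw [my_model_AC_iff hM₁ a b, hWeq₁ a b]
  have hA₂char : ∀ a b, A₂ a b ↔ (LLP T₂ a b ∧ W a b) := by
    intro a b
    rw [my_model_AC_iff hM₂ a b, hWeq₂ a b]
  -- the composition closure M of LLP T₁ ∪ LLP T₂ equals LLP T
  set r : P → P → Prop := fun x y => LLP T₁ x y ∨ LLP T₂ x y with hrdef
  set M : P → P → Prop := Relation.ReflTransGen r with hMdef
  have rle : ∀ x y, r x y → x ≤ y := by
    rintro x y (h | h) <;> exact h.1
  have Mle : ∀ x y, M x y → x ≤ y := by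
    intro x y h
    induction h with
    | refl => exact le_rfl
    | tail _ h ih => exact ih.trans (rle _ _ h)
  have Mrefl : ∀ x, M x x := fun x => Relation.ReflTransGen.refl
  have Mtrans : ∀ x y z, M x y → M y z → M x z := fun _ _ _ h h' =>
    Relation.ReflTransGen.trans h h'
  have Mpo : ∀ a b c, M a b → a ≤ c → M c (b ⊔ c) := by
    intro a b c h hac
    induction h with
    | refl =>
      rw [sup_eq_right.mpr hac]
    | @tail b' b _ hstep ih =>
      have hb'b : b' ≤ b := rle _ _ hstep
      have hstep' : r (b' ⊔ c) (b ⊔ (b' ⊔ c)) := by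
        rcases hstep with h | h
        · exact Or.inl (my_llp_pushout h le_sup_left)
        · exact Or.inr (my_llp_pushout h le_sup_left)
      have heq : b ⊔ (b' ⊔ c) = b ⊔ c := by
        rw [← sup_assoc, sup_eq_left.mpr hb'b]
      rw [heq] at hstep'
      exact ih.tail hstep'
  have hWFS_M : IsWFS M (RLP M) := my_cotransfer_isWFS Mrefl Mtrans Mle Mpo
  have hMeq : ∀ a b, M a b ↔ LLP T a b := by
    intro a b
    constructor
    · intro h
      induction h with
      | refl => exact my_llp_refl T a
      | tail _ hstep ih =>
        refine my_llp_trans ih ?_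
        rcases hstep with h | h
        · exact my_llp_anti (fun x y hh => hh.1) h
        · exact my_llp_anti (fun x y hh => hh.2) h
    · intro h
      refine (hWFS_M.2.1 a b).mpr ?_
      refine my_llp_anti (fun x y hR => ?_) h
      constructor
      · exact (hW2₁.2.2 x y).mpr (my_rlp_anti (S' := M) (fun u v hC =>
          Relation.ReflTransGen.single (Or.inl ((hW2₁.2.1 u v).mp hC))) hR)
      · exact (hW2₂.2.2 x y).mpr (my_rlp_anti (S' := M) (fun u v hC =>
          Relation.ReflTransGen.single (Or.inr ((hW2₂.2.1 u v).mp hC))) hR)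
  -- the acyclic cofibrations
  set AC : P → P → Prop := fun a b => LLP T a b ∧ W a b with hACdef
  have ACrefl : ∀ x, AC x x := fun x => ⟨my_llp_refl T x, Wrefl x⟩
  have ACle : ∀ x y, AC x y → x ≤ y := fun x y h => h.1.1
  have ACtrans : ∀ x y z, AC x y → AC y z → AC x z := fun x y z h h' =>
    ⟨my_llp_trans h.1 h'.1, (t23W x y z h.1.1 h'.1.1).1 h.2 h'.2⟩
  -- key pushout lemma for chains
  have key : ∀ b a, M a b → W a b → ∀ c, a ≤ c → M c (b ⊔ c) ∧ W c (b ⊔ c) := by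
    intro b a hab
    induction hab using Relation.ReflTransGen.head_induction_on with
    | refl =>
      intro _ c hac
      rw [sup_eq_right.mpr hac]
      exact ⟨Mrefl c, Wrefl c⟩
    | @head a a'' hstep hrest ih =>
      intro hWab c hac
      have haa'' : a ≤ a'' := rle _ _ hstep
      have ha''b : a'' ≤ b := Mle _ _ hrest
      obtain ⟨hWaa'', hWa''b⟩ := Wdecomp a a'' b haa'' ha''b hWab
      have hstep' : r c (a'' ⊔ c) ∧ W c (a'' ⊔ c) := by
        rcases hstep with h | h
        · have hA : A₁ a a'' := (hA₁char a a'').mpr ⟨h, hWaa''⟩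
          have hA' : A₁ c (a'' ⊔ c) := (hW1₁.2.1 _ _).mpr
            (my_llp_pushout ((hW1₁.2.1 a a'').mp hA) hac)
          obtain ⟨hL, hW'⟩ := (hA₁char c (a'' ⊔ c)).mp hA'
          exact ⟨Or.inl hL, hW'⟩
        · have hA : A₂ a a'' := (hA₂char a a'').mpr ⟨h, hWaa''⟩
          have hA' : A₂ c (a'' ⊔ c) := (hW1₂.2.1 _ _).mpr
            (my_llp_pushout ((hW1₂.2.1 a a'').mp hA) hac)
          obtain ⟨hL, hW'⟩ := (hA₂char c (a'' ⊔ c)).mp hA'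
          exact ⟨Or.inr hL, hW'⟩
      obtain ⟨ihM, ihW⟩ := ih hWa''b (a'' ⊔ c) le_sup_left
      have heq : b ⊔ (a'' ⊔ c) = b ⊔ c := by
        rw [← sup_assoc, sup_eq_left.mpr ha''b]
      rw [heq] at ihM ihW
      refine ⟨Relation.ReflTransGen.head hstep'.1 ihM, ?_⟩
      have h1 : c ≤ a'' ⊔ c := le_sup_right
      have h2 : a'' ⊔ c ≤ b ⊔ c := sup_le (ha''b.trans le_sup_left) le_sup_right
      exact (t23W c (a'' ⊔ c) (b ⊔ c) h1 h2).1 hstep'.2 ihW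
  have ACpo : ∀ a b c, AC a b → a ≤ c → AC c (b ⊔ c) := by
    rintro a b c ⟨hL, hW⟩ hac
    obtain ⟨hm, hw⟩ := key b a ((hMeq a b).mpr hL) hW c hac
    exact ⟨(hMeq _ _).mp hm, hw⟩
  have hWFS_AC : IsWFS AC (RLP AC) := my_cotransfer_isWFS ACrefl ACtrans ACle ACpo
  -- Comp T AC = W
  have WofT : ∀ x y, T x y → W x y := fun x y h => WofT₁ x y h.1
  have hCompW : ∀ x y, Comp T AC x y ↔ W x y := by
    intro x y
    constructor
    · rintro ⟨m, ⟨hLm, hWm⟩, hTm⟩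
      exact (t23W x m y (Wle _ _ hWm) (Tle _ _ hTm)).1 hWm (WofT _ _ hTm)
    · intro hW
      obtain ⟨m, hCm, hTm⟩ := hWFS_CT.1 x y (Wle _ _ hW)
      have hWmy : W m y := WofT _ _ hTm
      have hWxm : W x m := (t23W x m y hCm.1 (Tle _ _ hTm)).2.2 hWmy hW
      exact ⟨m, ⟨hCm, hWxm⟩, hTm⟩
  have t23' : TwoOutOfThree (Comp T AC) := by
    intro x y z hxy hyz
    obtain ⟨p, q, r'⟩ := t23W x y z hxy hyz
    exact ⟨fun h h' => (hCompW _ _).mpr (p ((hCompW _ _).mp h) ((hCompW _ _).mp h')),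
      fun h h' => (hCompW _ _).mpr (q ((hCompW _ _).mp h) ((hCompW _ _).mp h')),
      fun h h' => (hCompW _ _).mpr (r' ((hCompW _ _).mp h) ((hCompW _ _).mp h'))⟩
  exact ⟨AC, RLP AC, LLP T, ⟨hWFS_AC, hWFS_CT, fun a b h => h.1, t23'⟩, hCompW⟩
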